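/- Let n > 1, let U ⊂ ℝⁿ be a nonempty open O(n)-invariant set, I = {|x|² : x ∈ U}, and let θ : I → (0,∞) be of class C² satisfying the differential equation 2 s θ(s) θ''(s) = (1 − θ'(s)) (s θ'(s)² + θ(s)) for all s ∈ I, together with θ'(s) < 1 for all s ∈ I. Set ρ(x+iy) = |y|² − θ(|x|²) and Σ = {x+iy : x ∈ U, |y|² = θ(|x|²)}. Then L_ρ(p;v) ≥ 0 for every p ∈ Σ and every v ∈ T_p^ℂΣ; moreover, L_ρ(p;v) > 0 for every nonzero v ∈ T_p^ℂΣ at every point p = x+iy ∈ Σ with ⟨x,y⟩ ≠ 0, while at every point p = x+iy ∈ Σ with ⟨x,y⟩ = 0 there exists a nonzero v ∈ T_p^ℂΣ with L_ρ(p;v) = 0. -/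

import Mathlib

open Complex Set

/-- The Levi form of a `C²` function `ρ` at `p` in direction `v`:
`4 L_ρ(p;v) = H_p(v,v) + H_p(iv,iv)` where `H_p` is the second real Fréchet derivative. -/
noncomputable def leviForm {E : Type*} [NormedAddCommGroup E] [NormedSpace ℂ E]
    (ρ : E → ℝ) (p v : E) : ℝ :=
  (iteratedFDeriv ℝ 2 ρ p ![v, v]
    + iteratedFDeriv ℝ 2 ρ p ![Complex.I • v, Complex.I • v]) / 4

/-- The complex tangent space `T_p^ℂΣ = {v : dρ_p(v) = 0 and dρ_p(iv) = 0}`. -/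
def complexTangent {E : Type*} [NormedAddCommGroup E] [NormedSpace ℂ E]
    (ρ : E → ℝ) (p : E) : Set E :=
  {v | fderiv ℝ ρ p v = 0 ∧ fderiv ℝ ρ p (Complex.I • v) = 0}

/-- `ρ(x+iy) = |y|² - θ(|x|²)`. -/
noncomputable def rho (n : ℕ) (θ : ℝ → ℝ) : (Fin n → ℂ) → ℝ :=
  fun z => (∑ j, (z j).im ^ 2) - θ (∑ j, (z j).re ^ 2)

/-- The hypersurface `Σ = {x+iy : x ∈ U, |y|² = θ(|x|²)}`. -/
def SigmaSet (n : ℕ) (U : Set (Fin n → ℝ)) (θ : ℝ → ℝ) : Set (Fin n → ℂ) :=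
  {z | (fun j => (z j).re) ∈ U ∧ (∑ j, (z j).im ^ 2) = θ (∑ j, (z j).re ^ 2)}

/-!
Write a point of `Σ` as `p = x + iy` with `s = |x|²`, so that `|y|² = θ(s)`, and a direction as
`v = a + ib`. A direct computation gives
`L_ρ(p;v) = (1 - θ'(s)) (|a|² + |b|²) / 2 - θ''(s) (⟨x,a⟩² + ⟨x,b⟩²)`,
and `v` is complex tangent iff `⟨y,b⟩ = θ'(s) ⟨x,a⟩` and `⟨y,a⟩ = -θ'(s) ⟨x,b⟩`.
Adding the Gram determinant inequalities of `(x, y, a)` and `(x, y, b)`, the tangency relations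
cancel the mixed terms, and the differential equation turns the sum into
`2 s θ(s) L_ρ(p;v) ≥ (1 - θ'(s)) ⟨x,y⟩² |v|²`. This gives semidefiniteness, and definiteness
when `⟨x,y⟩ ≠ 0`. When `⟨x,y⟩ = 0`, the direction `v = θ(s) x + i s θ'(s) y` makes both Gram
determinants vanish and is a null direction.
-/

theorem gram_det_three_nonneg {ι : Type*} [Fintype ι] (x y a : ι → ℝ) :
    (x ⬝ᵥ x) * (y ⬝ᵥ a) ^ 2 + (y ⬝ᵥ y) * (x ⬝ᵥ a) ^ 2 + (a ⬝ᵥ a) * (x ⬝ᵥ y) ^ 2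
      ≤ (x ⬝ᵥ x) * (y ⬝ᵥ y) * (a ⬝ᵥ a) + 2 * (x ⬝ᵥ y) * (y ⬝ᵥ a) * (x ⬝ᵥ a) := by
  let A : Matrix (Fin 3) ι ℝ := ![x, y, a]
  have hA : A * A.conjTranspose =
      !![x ⬝ᵥ x, x ⬝ᵥ y, x ⬝ᵥ a; y ⬝ᵥ x, y ⬝ᵥ y, y ⬝ᵥ a; a ⬝ᵥ x, a ⬝ᵥ y, a ⬝ᵥ a] := by
    ext i j
    fin_cases i <;> fin_cases j <;> rfl
  have h := (Matrix.posSemidef_self_mul_conjTranspose A).det_nonneg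
  rw [hA, Matrix.det_fin_three] at h
  simp only [Fin.isValue, Matrix.of_apply, Matrix.cons_val', Matrix.cons_val_zero,
    Matrix.cons_val_fin_one, Matrix.cons_val_one, Matrix.cons_val] at h
  rw [dotProduct_comm y x, dotProduct_comm a x, dotProduct_comm a y] at h
  linarith

theorem sq_dotProduct_mul_le_of_tangent {ι : Type*} [Fintype ι] {x y a b : ι → ℝ} {t u : ℝ}
    (hode : 2 * (x ⬝ᵥ x) * (y ⬝ᵥ y) * u = (1 - t) * ((x ⬝ᵥ x) * t ^ 2 + y ⬝ᵥ y))
    (ht : t ≤ 1) (ha : y ⬝ᵥ a = -(t * (x ⬝ᵥ b))) (hb : y ⬝ᵥ b = t * (x ⬝ᵥ a)) :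
    (1 - t) * ((x ⬝ᵥ y) ^ 2 * (a ⬝ᵥ a + b ⬝ᵥ b)) ≤
      2 * (x ⬝ᵥ x) * (y ⬝ᵥ y) *
        ((1 - t) * (a ⬝ᵥ a + b ⬝ᵥ b) / 2 - u * ((x ⬝ᵥ a) ^ 2 + (x ⬝ᵥ b) ^ 2)) := by
  have hgram : ((x ⬝ᵥ x) * t ^ 2 + y ⬝ᵥ y) * ((x ⬝ᵥ a) ^ 2 + (x ⬝ᵥ b) ^ 2)
      + (x ⬝ᵥ y) ^ 2 * (a ⬝ᵥ a + b ⬝ᵥ b) ≤ (x ⬝ᵥ x) * (y ⬝ᵥ y) * (a ⬝ᵥ a + b ⬝ᵥ b) := by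
    have hGa := gram_det_three_nonneg x y a
    have hGb := gram_det_three_nonneg x y b
    rw [ha] at hGa
    rw [hb] at hGb
    linarith
  nlinarith [mul_le_mul_of_nonneg_left hgram (sub_nonneg.mpr ht)]

section SumOfSquares

variable {ι E : Type*} [Fintype ι] [NormedAddCommGroup E] [NormedSpace ℝ E]

noncomputable def sumSqFDeriv (ℓ : ι → E →L[ℝ] ℝ) : E →L[ℝ] E →L[ℝ] ℝ :=
  ∑ i, (2 : ℝ) • (ℓ i).smulRight (ℓ i)

@[simp]
theorem sumSqFDeriv_apply (ℓ : ι → E →L[ℝ] ℝ) (z v : E) :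
    sumSqFDeriv ℓ z v = 2 * ∑ i, ℓ i z * ℓ i v := by
  simp [sumSqFDeriv, Finset.mul_sum]

theorem hasFDerivAt_sum_sq (ℓ : ι → E →L[ℝ] ℝ) (p : E) :
    HasFDerivAt (fun z => ∑ i, ℓ i z ^ 2) (sumSqFDeriv ℓ p) p := by
  have h := HasFDerivAt.fun_sum fun i (_ : i ∈ Finset.univ) =>
    ((ℓ i).hasFDerivAt (x := p)).pow 2
  refine h.congr_fderiv (ContinuousLinearMap.ext fun v => ?_)
  simp [Finset.mul_sum, mul_assoc]

end SumOfSquares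

section Rho

variable {n : ℕ} {θ : ℝ → ℝ} {V : Set ℝ} {p : Fin n → ℂ} {s : ℝ}

noncomputable def reProj (j : Fin n) : (Fin n → ℂ) →L[ℝ] ℝ :=
  reCLM.comp (ContinuousLinearMap.proj j)

noncomputable def imProj (j : Fin n) : (Fin n → ℂ) →L[ℝ] ℝ :=
  imCLM.comp (ContinuousLinearMap.proj j)

@[simp]
theorem reProj_apply (j : Fin n) (z : Fin n → ℂ) : reProj j z = (z j).re := rfl

@[simp]
theorem imProj_apply (j : Fin n) (z : Fin n → ℂ) : imProj j z = (z j).im := rfl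

theorem re_comp_I_smul (v : Fin n → ℂ) : re ∘ (I • v) = -(im ∘ v) := by
  funext j
  simp

theorem im_comp_I_smul (v : Fin n → ℂ) : im ∘ (I • v) = re ∘ v := by
  funext j
  simp

theorem sum_sq_re_eq_dotProduct (v : Fin n → ℂ) : ∑ j, (v j).re ^ 2 = (re ∘ v) ⬝ᵥ (re ∘ v) := by
  simp [dotProduct, sq]

theorem sum_sq_im_eq_dotProduct (v : Fin n → ℂ) : ∑ j, (v j).im ^ 2 = (im ∘ v) ⬝ᵥ (im ∘ v) := by
  simp [dotProduct, sq]

theorem sum_norm_sq_eq_dotProduct (v : Fin n → ℂ) :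
    ∑ j, ‖v j‖ ^ 2 = (re ∘ v) ⬝ᵥ (re ∘ v) + (im ∘ v) ⬝ᵥ (im ∘ v) := by
  simp [dotProduct, Complex.sq_norm, normSq_apply, Finset.sum_add_distrib]

theorem hasFDerivAt_rho (hV : IsOpen V) (hθ : ContDiffOn ℝ 2 θ V)
    (hp : ∑ j, (p j).re ^ 2 ∈ V) :
    HasFDerivAt (rho n θ)
      (sumSqFDeriv imProj p - deriv θ (∑ j, (p j).re ^ 2) • sumSqFDeriv reProj p) p := by
  have hθ' : HasDerivAt θ (deriv θ _) _ :=
    ((hθ.contDiffAt (hV.mem_nhds hp)).differentiableAt (by norm_num)).hasDerivAt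
  exact (hasFDerivAt_sum_sq imProj p).sub (hθ'.comp_hasFDerivAt p (hasFDerivAt_sum_sq reProj p))

theorem hasFDerivAt_fderiv_rho (hV : IsOpen V) (hθ : ContDiffOn ℝ 2 θ V)
    (hp : ∑ j, (p j).re ^ 2 ∈ V) :
    HasFDerivAt (fderiv ℝ (rho n θ))
      (sumSqFDeriv imProj - (deriv θ (∑ j, (p j).re ^ 2) • sumSqFDeriv reProj +
        (deriv (deriv θ) (∑ j, (p j).re ^ 2) • sumSqFDeriv reProj p).smulRight
          (sumSqFDeriv reProj p))) p := by
  have hθ'' : HasDerivAt (deriv θ) (deriv (deriv θ) (∑ j, (p j).re ^ 2)) (∑ j, (p j).re ^ 2) :=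
    (((hθ.deriv_of_isOpen (m := 1) hV (by norm_num)).contDiffAt (hV.mem_nhds hp)).differentiableAt
      (by norm_num)).hasDerivAt
  have hfderiv : fderiv ℝ (rho n θ) =ᶠ[nhds p] fun z =>
      sumSqFDeriv imProj z - deriv θ (∑ j, (z j).re ^ 2) • sumSqFDeriv reProj z := by
    have hcont : Continuous fun z : Fin n → ℂ => ∑ j, (z j).re ^ 2 := by fun_prop
    filter_upwards [hcont.continuousAt.preimage_mem_nhds (hV.mem_nhds hp)] with z hz
    exact (hasFDerivAt_rho hV hθ hz).fderiv
  have hcoeff := hθ''.comp_hasFDerivAt p (hasFDerivAt_sum_sq reProj p)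
  exact ((sumSqFDeriv imProj).hasFDerivAt.sub
    (hcoeff.smul (sumSqFDeriv reProj).hasFDerivAt)).congr_of_eventuallyEq hfderiv

theorem fderiv_rho_apply (hV : IsOpen V) (hθ : ContDiffOn ℝ 2 θ V)
    (hps : ∑ j, (p j).re ^ 2 = s) (hsV : s ∈ V) (v : Fin n → ℂ) :
    fderiv ℝ (rho n θ) p v =
      2 * ((im ∘ p) ⬝ᵥ (im ∘ v)) - 2 * deriv θ s * ((re ∘ p) ⬝ᵥ (re ∘ v)) := by
  subst hps
  rw [(hasFDerivAt_rho hV hθ hsV).fderiv]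
  simp only [sub_apply, sumSqFDeriv_apply, imProj_apply,
    smul_apply, reProj_apply, smul_eq_mul, dotProduct, Function.comp_apply]
  ring

theorem leviForm_rho (hV : IsOpen V) (hθ : ContDiffOn ℝ 2 θ V)
    (hps : ∑ j, (p j).re ^ 2 = s) (hsV : s ∈ V) (v : Fin n → ℂ) :
    leviForm (rho n θ) p v =
      (1 - deriv θ s) * ((re ∘ v) ⬝ᵥ (re ∘ v) + (im ∘ v) ⬝ᵥ (im ∘ v)) / 2
        - deriv (deriv θ) s * (((re ∘ p) ⬝ᵥ (re ∘ v)) ^ 2 + ((re ∘ p) ⬝ᵥ (im ∘ v)) ^ 2) := by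
  subst hps
  have hHess : ∀ w : Fin n → ℂ, iteratedFDeriv ℝ 2 (rho n θ) p ![w, w] =
      2 * ((im ∘ w) ⬝ᵥ (im ∘ w)) - 2 * deriv θ (∑ j, (p j).re ^ 2) * ((re ∘ w) ⬝ᵥ (re ∘ w))
        - 4 * deriv (deriv θ) (∑ j, (p j).re ^ 2) * ((re ∘ p) ⬝ᵥ (re ∘ w)) ^ 2 := by
    intro w
    rw [iteratedFDeriv_two_apply, (hasFDerivAt_fderiv_rho hV hθ hsV).fderiv]
    simp only [Matrix.cons_val_zero, Matrix.cons_val_one, Matrix.cons_val_fin_one,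
      sub_apply, add_apply, smul_apply,
      ContinuousLinearMap.smulRight_apply, sumSqFDeriv_apply, reProj_apply, imProj_apply,
      smul_eq_mul, dotProduct, Function.comp_apply]
    ring
  rw [leviForm, hHess, hHess, re_comp_I_smul, im_comp_I_smul]
  simp only [dotProduct_neg, neg_dotProduct, neg_neg, neg_sq]
  ring

theorem mem_complexTangent_rho_iff (hV : IsOpen V) (hθ : ContDiffOn ℝ 2 θ V)
    (hps : ∑ j, (p j).re ^ 2 = s) (hsV : s ∈ V) {v : Fin n → ℂ} :
    v ∈ complexTangent (rho n θ) p ↔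
      (im ∘ p) ⬝ᵥ (im ∘ v) = deriv θ s * ((re ∘ p) ⬝ᵥ (re ∘ v)) ∧
      (im ∘ p) ⬝ᵥ (re ∘ v) = -(deriv θ s * ((re ∘ p) ⬝ᵥ (im ∘ v))) := by
  simp only [complexTangent, mem_ofPred_eq, fderiv_rho_apply hV hθ hps hsV, re_comp_I_smul,
    im_comp_I_smul, dotProduct_neg]
  constructor <;> rintro ⟨h₁, h₂⟩ <;> constructor <;> linarith

theorem sq_dotProduct_mul_le_leviForm_rho (hV : IsOpen V) (hθ : ContDiffOn ℝ 2 θ V)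
    (hps : ∑ j, (p j).re ^ 2 = s) (hsV : s ∈ V) (hsurf : ∑ j, (p j).im ^ 2 = θ s)
    (hode : 2 * s * θ s * deriv (deriv θ) s = (1 - deriv θ s) * (s * deriv θ s ^ 2 + θ s))
    (ht : deriv θ s ≤ 1) {v : Fin n → ℂ} (hv : v ∈ complexTangent (rho n θ) p) :
    (1 - deriv θ s) * (((re ∘ p) ⬝ᵥ (im ∘ p)) ^ 2 * ∑ j, ‖v j‖ ^ 2)
      ≤ 2 * s * θ s * leviForm (rho n θ) p v := by
  obtain ⟨hb, ha⟩ := (mem_complexTangent_rho_iff hV hθ hps hsV).1 hv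
  rw [leviForm_rho hV hθ hps hsV, sum_norm_sq_eq_dotProduct]
  have hx : s = (re ∘ p) ⬝ᵥ (re ∘ p) := hps ▸ sum_sq_re_eq_dotProduct p
  have hy : θ s = (im ∘ p) ⬝ᵥ (im ∘ p) := hsurf ▸ sum_sq_im_eq_dotProduct p
  -- Abstracting `θ'(s)` and `θ''(s)` keeps `rw [hx]` from rewriting their argument.
  set t := deriv θ s
  set u := deriv (deriv θ) s
  rw [hy, hx] at hode ⊢
  exact sq_dotProduct_mul_le_of_tangent hode ht ha hb

theorem exists_leviForm_rho_eq_zero (hV : IsOpen V) (hθ : ContDiffOn ℝ 2 θ V)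
    (hps : ∑ j, (p j).re ^ 2 = s) (hsV : s ∈ V) (hsurf : ∑ j, (p j).im ^ 2 = θ s)
    (hode : 2 * s * θ s * deriv (deriv θ) s = (1 - deriv θ s) * (s * deriv θ s ^ 2 + θ s))
    (hs : s ≠ 0) (hθs : θ s ≠ 0) (hxy : (re ∘ p) ⬝ᵥ (im ∘ p) = 0) :
    ∃ v ∈ complexTangent (rho n θ) p, v ≠ 0 ∧ leviForm (rho n θ) p v = 0 := by
  have hx : (re ∘ p) ⬝ᵥ (re ∘ p) = s := hps ▸ (sum_sq_re_eq_dotProduct p).symm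
  have hy : (im ∘ p) ⬝ᵥ (im ∘ p) = θ s := hsurf ▸ (sum_sq_im_eq_dotProduct p).symm
  let v : Fin n → ℂ := fun j => ⟨θ s * (p j).re, s * deriv θ s * (p j).im⟩
  have hre : re ∘ v = θ s • (re ∘ p) := rfl
  have him : im ∘ v = (s * deriv θ s) • (im ∘ p) := rfl
  refine ⟨v, (mem_complexTangent_rho_iff hV hθ hps hsV).2 ⟨?_, ?_⟩, fun hv => ?_, ?_⟩
  · simp only [hre, him, dotProduct_smul, smul_eq_mul, hx, hy]
    ring
  · simp only [hre, him, dotProduct_smul, smul_dotProduct, smul_eq_mul, hxy,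
      dotProduct_comm (im ∘ p)]
    ring
  · refine mul_ne_zero hθs hs ?_
    calc θ s * s = (re ∘ p) ⬝ᵥ (re ∘ v) := by simp only [hre, dotProduct_smul, smul_eq_mul, hx]
      _ = 0 := by simp [hv, dotProduct]
  · rw [leviForm_rho hV hθ hps hsV]
    simp only [hre, him, dotProduct_smul, smul_dotProduct, smul_eq_mul, hx, hy, hxy]
    linear_combination (-(θ s * s) / 2) * hode

end Rho

theorem ne_zero_of_ode {θ : ℝ → ℝ} {s : ℝ}
    (hode : 2 * s * θ s * deriv (deriv θ) s = (1 - deriv θ s) * (s * deriv θ s ^ 2 + θ s))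
    (hθs : 0 < θ s) (ht : deriv θ s < 1) : s ≠ 0 := by
  rintro rfl
  nlinarith [mul_pos (sub_pos.2 ht) hθs]

theorem stmt_2_general {n : ℕ} (U : Set (Fin n → ℝ))
    (θ : ℝ → ℝ) (V : Set ℝ) (hV : IsOpen V)
    (hIV : {s : ℝ | ∃ x ∈ U, s = ∑ j, x j ^ 2} ⊆ V)
    (hθ : ContDiffOn ℝ 2 θ V)
    (hθpos : ∀ s ∈ {s : ℝ | ∃ x ∈ U, s = ∑ j, x j ^ 2}, 0 < θ s)
    (hode : ∀ s ∈ {s : ℝ | ∃ x ∈ U, s = ∑ j, x j ^ 2},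
      2 * s * θ s * deriv (deriv θ) s =
        (1 - deriv θ s) * (s * (deriv θ s) ^ 2 + θ s))
    (hθ' : ∀ s ∈ {s : ℝ | ∃ x ∈ U, s = ∑ j, x j ^ 2}, deriv θ s < 1) :
    (∀ p ∈ SigmaSet n U θ, ∀ v ∈ complexTangent (rho n θ) p,
        0 ≤ leviForm (rho n θ) p v) ∧
    (∀ p ∈ SigmaSet n U θ, (∑ j, (p j).re * (p j).im) ≠ 0 →
        ∀ v ∈ complexTangent (rho n θ) p, v ≠ 0 → 0 < leviForm (rho n θ) p v) ∧
    (∀ p ∈ SigmaSet n U θ, (∑ j, (p j).re * (p j).im) = 0 →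
        ∃ v ∈ complexTangent (rho n θ) p, v ≠ 0 ∧ leviForm (rho n θ) p v = 0) := by
  have hI : ∀ p ∈ SigmaSet n U θ, ∑ j, (p j).re ^ 2 ∈ {s : ℝ | ∃ x ∈ U, s = ∑ j, x j ^ 2} :=
    fun p hp => ⟨_, hp.1, rfl⟩
  have hpos : ∀ p ∈ SigmaSet n U θ, 0 < ∑ j, (p j).re ^ 2 ∧ 0 < θ (∑ j, (p j).re ^ 2) ∧
      0 < 1 - deriv θ (∑ j, (p j).re ^ 2) := by
    intro p hp
    have hθs := hθpos _ (hI p hp)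
    have ht := hθ' _ (hI p hp)
    refine ⟨(Finset.sum_nonneg fun j _ => sq_nonneg _).lt_of_ne'
      (ne_zero_of_ode (hode _ (hI p hp)) hθs ht), hθs, sub_pos.2 ht⟩
  have hbound : ∀ p ∈ SigmaSet n U θ, ∀ v ∈ complexTangent (rho n θ) p,
      (1 - deriv θ (∑ j, (p j).re ^ 2)) * ((∑ j, (p j).re * (p j).im) ^ 2 * ∑ j, ‖v j‖ ^ 2)
        ≤ 2 * (∑ j, (p j).re ^ 2) * θ (∑ j, (p j).re ^ 2) * leviForm (rho n θ) p v :=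
    fun p hp v hv => sq_dotProduct_mul_le_leviForm_rho hV hθ rfl (hIV (hI p hp)) hp.2
      (hode _ (hI p hp)) (hθ' _ (hI p hp)).le hv
  refine ⟨fun p hp v hv => ?_, fun p hp hxy v hv hv₀ => ?_, fun p hp hxy => ?_⟩
  · obtain ⟨hs, hθs, ht⟩ := hpos p hp
    exact nonneg_of_mul_nonneg_right ((hbound p hp v hv).trans' (by positivity)) (by positivity)
  · obtain ⟨hs, hθs, ht⟩ := hpos p hp
    obtain ⟨j, hj⟩ := Function.ne_iff.1 hv₀
    have hnorm : 0 < ∑ j, ‖v j‖ ^ 2 :=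
      Finset.sum_pos' (fun _ _ => by positivity) ⟨j, Finset.mem_univ j, by positivity⟩
    exact (pos_iff_pos_of_mul_pos ((hbound p hp v hv).trans_lt' (by positivity))).mp
      (by positivity)
  · obtain ⟨hs, hθs, -⟩ := hpos p hp
    exact exists_leviForm_rho_eq_zero hV hθ rfl (hIV (hI p hp)) hp.2 (hode _ (hI p hp)) hs.ne'
      hθs.ne' hxy

theorem stmt_2 {n : ℕ} (hn : 1 < n)
    (U : Set (Fin n → ℝ)) (hUne : U.Nonempty) (hUopen : IsOpen U)
    (hUinv : ∀ x x' : Fin n → ℝ, x ∈ U → (∑ j, x' j ^ 2) = (∑ j, x j ^ 2) → x' ∈ U)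
    (θ : ℝ → ℝ) (V : Set ℝ) (hV : IsOpen V)
    (hIV : {s : ℝ | ∃ x ∈ U, s = ∑ j, x j ^ 2} ⊆ V)
    (hθ : ContDiffOn ℝ 2 θ V)
    (hθpos : ∀ s ∈ {s : ℝ | ∃ x ∈ U, s = ∑ j, x j ^ 2}, 0 < θ s)
    (hode : ∀ s ∈ {s : ℝ | ∃ x ∈ U, s = ∑ j, x j ^ 2},
      2 * s * θ s * deriv (deriv θ) s =
        (1 - deriv θ s) * (s * (deriv θ s) ^ 2 + θ s))
    (hθ' : ∀ s ∈ {s : ℝ | ∃ x ∈ U, s = ∑ j, x j ^ 2}, deriv θ s < 1) :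
    (∀ p ∈ SigmaSet n U θ, ∀ v ∈ complexTangent (rho n θ) p,
        0 ≤ leviForm (rho n θ) p v) ∧
    (∀ p ∈ SigmaSet n U θ, (∑ j, (p j).re * (p j).im) ≠ 0 →
        ∀ v ∈ complexTangent (rho n θ) p, v ≠ 0 → 0 < leviForm (rho n θ) p v) ∧
    (∀ p ∈ SigmaSet n U θ, (∑ j, (p j).re * (p j).im) = 0 →
        ∃ v ∈ complexTangent (rho n θ) p, v ≠ 0 ∧ leviForm (rho n θ) p v = 0) :=
  stmt_2_general U θ V hV hIV hθ hθpos hode hθ'
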